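/- arXiv:2412.05884 — 4 statements merged into one kernel-verified Lean document; each statement's English description precedes it below -/
import Mathlib

section
/- Let K > 0, let m > 1 and k ≥ 0 be real numbers, let A > 0, and let u be a real number with 0 ≤ u ≤ K. Set P := (m/(m−1)) · u^{m−1}. Then u^{m+k} ≤ ((m−1)/m) · (((m−1)/m) · A)^{(k+1)/(m−1)} · P + ((m−1)/m) · K^{k+1} · P²/A, where all powers are real powers. -/
/-- Pointwise inequality relating `u^(m+k)` to the pressure `P = (m/(m-1)) u^(m-1)`. -/
theorem stmt3 (K m k A u : ℝ) (hK : 0 < K) (hm : 1 < m) (hk : 0 ≤ k) (hA : 0 < A)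
    (hu0 : 0 ≤ u) (huK : u ≤ K) :
    u ^ (m + k) ≤
      ((m - 1) / m) * (((m - 1) / m) * A) ^ ((k + 1) / (m - 1))
          * ((m / (m - 1)) * u ^ (m - 1))
        + ((m - 1) / m) * K ^ (k + 1) * ((m / (m - 1)) * u ^ (m - 1)) ^ 2 / A := by
  have hm1 : 0 < m - 1 := by linarith
  have hmpos : 0 < m := by linarith
  rcases eq_or_lt_of_le hu0 with h0 | hup
  · rw [← h0, Real.zero_rpow (by positivity), Real.zero_rpow (ne_of_gt hm1)]
    rw [mul_zero, mul_zero]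
    norm_num
  · have key : u ^ (m + k) = u ^ (k + 1) * u ^ (m - 1) := by
      rw [← Real.rpow_add hup]; ring_nf
    have hP : (0:ℝ) ≤ u ^ (m - 1) := Real.rpow_nonneg hu0 _
    rw [key]
    by_cases hcase : u ^ (m - 1) ≤ ((m - 1) / m) * A
    · have h1 : u ^ (k + 1) ≤ (((m - 1) / m) * A) ^ ((k + 1) / (m - 1)) := by
        have e : u ^ (k + 1) = (u ^ (m - 1)) ^ ((k + 1) / (m - 1)) := by
          rw [← Real.rpow_mul hu0]
          congr 1
          field_simp
        rw [e]
        exact Real.rpow_le_rpow hP hcase (by positivity)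
      have hB : (0:ℝ) ≤ (((m - 1) / m) * A) ^ ((k + 1) / (m - 1)) :=
        Real.rpow_nonneg (by positivity) _
      have h2 : (0:ℝ) ≤ ((m - 1) / m) * K ^ (k + 1) * ((m / (m - 1)) * u ^ (m - 1)) ^ 2 / A := by
        have : (0:ℝ) ≤ K ^ (k + 1) := Real.rpow_nonneg hK.le _
        positivity
      have e1 : ((m - 1) / m) * (((m - 1) / m) * A) ^ ((k + 1) / (m - 1))
          * ((m / (m - 1)) * u ^ (m - 1))
          = (((m - 1) / m) * A) ^ ((k + 1) / (m - 1)) * u ^ (m - 1) := by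
        field_simp
      rw [e1]
      nlinarith [mul_le_mul_of_nonneg_right h1 hP]
    · push_neg at hcase
      have h1 : u ^ (k + 1) ≤ K ^ (k + 1) :=
        Real.rpow_le_rpow hu0 huK (by positivity)
      have hKk : (0:ℝ) ≤ K ^ (k + 1) := Real.rpow_nonneg hK.le _
      have hB : (0:ℝ) ≤ (((m - 1) / m) * A) ^ ((k + 1) / (m - 1)) :=
        Real.rpow_nonneg (by positivity) _
      have h2 : u ^ (m - 1) ≤ (m / (m - 1)) * (u ^ (m - 1)) ^ 2 / A := by
        rw [le_div_iff₀ hA]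
        have hc2 : (m - 1) * A < m * u ^ (m - 1) := by
          have := (div_lt_iff₀ hmpos).mp ((div_mul_eq_mul_div (m-1) m A) ▸ hcase)
          linarith [this]
        rw [div_mul_eq_mul_div, le_div_iff₀ hm1]
        nlinarith [mul_le_mul_of_nonneg_left hc2.le hP]
      have e2 : ((m - 1) / m) * K ^ (k + 1) * ((m / (m - 1)) * u ^ (m - 1)) ^ 2 / A
          = K ^ (k + 1) * ((m / (m - 1)) * (u ^ (m - 1)) ^ 2 / A) := by
        field_simp
      rw [e2]
      have hfirst : (0:ℝ) ≤ ((m - 1) / m) * (((m - 1) / m) * A) ^ ((k + 1) / (m - 1))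
          * ((m / (m - 1)) * u ^ (m - 1)) := by positivity
      nlinarith [mul_le_mul h1 h2 hP hKk]
end

section
/- Let (Ω, μ) be a finite measure space and K ≥ 0. Let (u_n) be a sequence of measurable functions on Ω with 0 ≤ u_n ≤ K a.e., let u, v : Ω → ℝ be measurable and bounded, and let P : Ω → [0, ∞) be integrable. Assume: (i) for every g ∈ L¹(μ), ∫ u_n g dμ → ∫ u g dμ and ∫ u_n² g dμ → ∫ v g dμ; (ii) u·P = P a.e. and v·P = P a.e. Then ∫ (u_n − 1)² P dμ → 0 as n → ∞; equivalently, u_n·√P → √P strongly in L²(μ). -/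
open MeasureTheory Filter

/-- Weak-* convergence of `u_n` and `u_n²` (to `u` and `v`), combined with the relations
`u P = P` and `v P = P`, gives `∫ (u_n - 1)² P dμ → 0`, equivalently
`u_n √P → √P` strongly in `L²(μ)`. -/
theorem stmt6 {Ω : Type*} [MeasurableSpace Ω] (μ : Measure Ω) [IsFiniteMeasure μ]
    (K : ℝ) (hK : 0 ≤ K)
    (un : ℕ → Ω → ℝ) (hun_meas : ∀ n, Measurable (un n))
    (hun_bd : ∀ n, ∀ᵐ x ∂μ, 0 ≤ un n x ∧ un n x ≤ K)
    (u v : Ω → ℝ) (hu_meas : Measurable u) (hv_meas : Measurable v)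
    (Cu Cv : ℝ) (hu_bd : ∀ x, |u x| ≤ Cu) (hv_bd : ∀ x, |v x| ≤ Cv)
    (P : Ω → ℝ) (hP_int : Integrable P μ) (hP0 : ∀ x, 0 ≤ P x)
    (hconv1 : ∀ g : Ω → ℝ, Integrable g μ →
      Tendsto (fun n => ∫ x, un n x * g x ∂μ) atTop (nhds (∫ x, u x * g x ∂μ)))
    (hconv2 : ∀ g : Ω → ℝ, Integrable g μ →
      Tendsto (fun n => ∫ x, (un n x) ^ 2 * g x ∂μ) atTop (nhds (∫ x, v x * g x ∂μ)))
    (huP : ∀ᵐ x ∂μ, u x * P x = P x) (hvP : ∀ᵐ x ∂μ, v x * P x = P x) :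
    Tendsto (fun n => ∫ x, (un n x - 1) ^ 2 * P x ∂μ) atTop (nhds 0) ∧
    Tendsto (fun n => ∫ x, |un n x * Real.sqrt (P x) - Real.sqrt (P x)| ^ 2 ∂μ)
      atTop (nhds 0) := by
  -- integrability facts
  have hbd : ∀ n, ∀ᵐ x ∂μ, ‖un n x‖ ≤ K := by
    intro n; filter_upwards [hun_bd n] with x hx
    rw [Real.norm_eq_abs, abs_le]; exact ⟨le_trans (by linarith [hx.1]) hx.1, hx.2⟩
  have hbd2 : ∀ n, ∀ᵐ x ∂μ, ‖un n x ^ 2‖ ≤ K ^ 2 := by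
    intro n; filter_upwards [hun_bd n] with x hx
    rw [Real.norm_eq_abs, abs_le]
    constructor
    · nlinarith [sq_nonneg (un n x)]
    · nlinarith [hx.1, hx.2]
  have hint1 : ∀ n, Integrable (fun x => un n x * P x) μ := fun n =>
    hP_int.bdd_mul ((hun_meas n).aestronglyMeasurable) (hbd n)
  have hint2 : ∀ n, Integrable (fun x => un n x ^ 2 * P x) μ := fun n =>
    hP_int.bdd_mul (((hun_meas n).pow_const 2).aestronglyMeasurable) (hbd2 n)
  -- limits of the pieces
  have hIuP : (∫ x, u x * P x ∂μ) = ∫ x, P x ∂μ := integral_congr_ae huP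
  have hIvP : (∫ x, v x * P x ∂μ) = ∫ x, P x ∂μ := integral_congr_ae hvP
  have h1 := hconv1 P hP_int
  have h2 := hconv2 P hP_int
  rw [hIuP] at h1
  rw [hIvP] at h2
  -- combine
  have hmain : Tendsto (fun n => ∫ x, (un n x - 1) ^ 2 * P x ∂μ) atTop (nhds 0) := by
    have hcomb : Tendsto (fun n => (∫ x, un n x ^ 2 * P x ∂μ)
        - 2 * (∫ x, un n x * P x ∂μ) + ∫ x, P x ∂μ) atTop
        (nhds ((∫ x, P x ∂μ) - 2 * (∫ x, P x ∂μ) + ∫ x, P x ∂μ)) := by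
      exact ((h2.sub (h1.const_mul 2)).add tendsto_const_nhds)
    have : (∫ x, P x ∂μ) - 2 * (∫ x, P x ∂μ) + ∫ x, P x ∂μ = 0 := by ring
    rw [this] at hcomb
    refine hcomb.congr fun n => ?_
    have e : (∫ x, (un n x - 1) ^ 2 * P x ∂μ)
        = ∫ x, (un n x ^ 2 * P x - 2 * (un n x * P x)) + P x ∂μ := by
      congr 1; funext x; ring
    have hsub : Integrable (fun x => un n x ^ 2 * P x - 2 * (un n x * P x)) μ :=
      (hint2 n).sub ((hint1 n).const_mul 2)
    rw [e, integral_add hsub hP_int,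
      integral_sub (hint2 n) ((hint1 n).const_mul 2), integral_const_mul]
  refine ⟨hmain, ?_⟩
  refine hmain.congr fun n => ?_
  congr 1; funext x
  rw [sq_abs]
  have : un n x * Real.sqrt (P x) - Real.sqrt (P x) = (un n x - 1) * Real.sqrt (P x) := by ring
  rw [this, mul_pow, Real.sq_sqrt (hP0 x)]
end

section
/- Let K > 0 and let f : [0, ∞) → ℝ be antitone (nonincreasing) with 0 ≤ f ≤ 1 and f(ξ) = 0 for all ξ > K. Set u := ∫_{(0,∞)} f(η) dη and, for ξ ≥ 0, ρ(ξ) := ξ·f(ξ) + ∫_{(ξ,∞)} f(η) dη. Then for every ξ ≥ 0: 0 ≤ ρ(ξ) − u·f(ξ) ≤ 2K · f(ξ)·(1 − f(ξ)). -/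
/-!
Splitting `u = ∫_{(0,ξ]} f + ∫_{(ξ,∞)} f` gives
`ρ(ξ) - u f(ξ) = f(ξ) (ξ - ∫_{(0,ξ]} f) + (1 - f(ξ)) ∫_{(ξ,∞)} f`, a sum of nonnegative terms.
Since `f` is nonincreasing, `∫_{(0,ξ]} f ≥ ξ f(ξ)` and `∫_{(ξ,∞)} f = ∫_{(ξ,K]} f ≤ (K - ξ) f(ξ)`,
so the sum is at most `K f(ξ) (1 - f(ξ))`.
-/

open MeasureTheory Set

section AntitoneOn

variable {f : ℝ → ℝ} {a b : ℝ}

theorem AntitoneOn.integrableOn_Ioi_of_eq_zero (hf : AntitoneOn f (Ici a))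
    (hzero : ∀ x, b < x → f x = 0) : IntegrableOn f (Ioi a) := by
  have hIcc : IntegrableOn f (Icc a b) :=
    (hf.mono Icc_subset_Ici_self).integrableOn_isCompact isCompact_Icc
  have hIoi : IntegrableOn f (Ioi b) :=
    integrableOn_zero.congr_fun (fun x hx => (hzero x hx).symm) measurableSet_Ioi
  refine (hIcc.union hIoi).mono_set fun x hx => ?_
  rcases le_or_gt x b with h | h
  exacts [Or.inl ⟨hx.le, h⟩, Or.inr h]

theorem AntitoneOn.mul_le_setIntegral_Ioc (hf : AntitoneOn f (Icc a b)) (hab : a ≤ b) :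
    (b - a) * f b ≤ ∫ x in Ioc a b, f x := by
  have h := setIntegral_ge_of_const_le_real measurableSet_Ioc
    (measure_Ioc_lt_top (μ := volume)).ne
    (fun x hx => hf ⟨hx.1.le, hx.2⟩ ⟨hab, le_rfl⟩ hx.2)
    ((hf.integrableOn_isCompact isCompact_Icc).mono_set Ioc_subset_Icc_self)
  rwa [Real.volume_real_Ioc_of_le hab, mul_comm] at h

theorem AntitoneOn.setIntegral_Ioc_le_mul (hf : AntitoneOn f (Icc a b)) (hab : a ≤ b) :
    ∫ x in Ioc a b, f x ≤ (b - a) * f a := by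
  have h := setIntegral_mono_on
    ((hf.integrableOn_isCompact isCompact_Icc).mono_set Ioc_subset_Icc_self)
    (integrableOn_const (measure_Ioc_lt_top (μ := volume)).ne) measurableSet_Ioc
    (fun x hx => hf ⟨le_rfl, hab⟩ ⟨hx.1.le, hx.2⟩ hx.1.le)
  rwa [setIntegral_const, Real.volume_real_Ioc_of_le hab, smul_eq_mul] at h

theorem setIntegral_Ioi_eq_setIntegral_Ioc (hzero : ∀ x, b < x → f x = 0) :
    ∫ x in Ioi a, f x = ∫ x in Ioc a b, f x :=
  setIntegral_eq_of_subset_of_forall_sdiff_eq_zero measurableSet_Ioi Ioc_subset_Ioi_self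
    fun x hx => hzero x (lt_of_not_ge fun h => hx.2 ⟨hx.1, h⟩)

end AntitoneOn

theorem defect_le_of_bounds {ξ K y A B : ℝ} (hξ : 0 ≤ ξ) (hξK : ξ ≤ K) (hy0 : 0 ≤ y)
    (hy1 : y ≤ 1) (hA_ge : ξ * y ≤ A) (hA_le : A ≤ ξ) (hB_nonneg : 0 ≤ B)
    (hB_le : B ≤ (K - ξ) * y) :
    0 ≤ ξ * y + B - (A + B) * y ∧ ξ * y + B - (A + B) * y ≤ 2 * K * (y * (1 - y)) := by
  have hy1' : 0 ≤ 1 - y := sub_nonneg.2 hy1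
  rw [show ξ * y + B - (A + B) * y = y * (ξ - A) + (1 - y) * B by ring]
  constructor
  · exact add_nonneg (mul_nonneg hy0 (sub_nonneg.2 hA_le)) (mul_nonneg hy1' hB_nonneg)
  · calc y * (ξ - A) + (1 - y) * B
        ≤ y * (ξ * (1 - y)) + (1 - y) * ((K - ξ) * y) := by gcongr; linarith
      _ = K * (y * (1 - y)) := by ring
      _ ≤ 2 * K * (y * (1 - y)) := by
        have : 0 ≤ y * (1 - y) := mul_nonneg hy0 hy1'
        nlinarith

theorem stmt9_general (K : ℝ) (f : ℝ → ℝ)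
    (hf_anti : AntitoneOn f (Set.Ici 0))
    (hf0 : ∀ ξ, 0 ≤ ξ → 0 ≤ f ξ) (hf1 : ∀ ξ, 0 ≤ ξ → f ξ ≤ 1)
    (hfK : ∀ ξ, K < ξ → f ξ = 0) :
    ∀ ξ : ℝ, 0 ≤ ξ →
      0 ≤ (ξ * f ξ + ∫ η in Set.Ioi ξ, f η) - (∫ η in Set.Ioi (0 : ℝ), f η) * f ξ ∧
      (ξ * f ξ + ∫ η in Set.Ioi ξ, f η) - (∫ η in Set.Ioi (0 : ℝ), f η) * f ξ
        ≤ 2 * K * (f ξ * (1 - f ξ)) := by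
  intro ξ hξ
  rcases lt_or_ge K ξ with hKξ | hξK
  · have hB : ∫ η in Ioi ξ, f η = 0 :=
      setIntegral_eq_zero_of_forall_eq_zero fun η hη => hfK η (hKξ.trans hη)
    simp [hfK ξ hKξ, hB]
  have hanti : AntitoneOn f (Icc 0 K) := hf_anti.mono Icc_subset_Ici_self
  set A := ∫ η in Ioc 0 ξ, f η
  set B := ∫ η in Ioi ξ, f η
  have hu : ∫ η in Ioi (0 : ℝ), f η = A + B := by
    rw [← Ioc_union_Ioi_eq_Ioi hξ]
    exact setIntegral_union (Ioc_disjoint_Ioi le_rfl) measurableSet_Ioi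
      ((hf_anti.integrableOn_Ioi_of_eq_zero hfK).mono_set Ioc_subset_Ioi_self)
      ((hf_anti.mono (Ici_subset_Ici.2 hξ)).integrableOn_Ioi_of_eq_zero hfK)
  have hA_ge : ξ * f ξ ≤ A := by
    simpa using (hanti.mono (Icc_subset_Icc_right hξK)).mul_le_setIntegral_Ioc hξ
  have hA_le : A ≤ ξ := by
    have := (hanti.mono (Icc_subset_Icc_right hξK)).setIntegral_Ioc_le_mul hξ
    nlinarith [hf1 0 le_rfl]
  have hB_nonneg : 0 ≤ B :=
    setIntegral_nonneg measurableSet_Ioi fun η hη => hf0 η (hξ.trans hη.le)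
  have hB_le : B ≤ (K - ξ) * f ξ := by
    rw [show B = ∫ η in Ioc ξ K, f η from setIntegral_Ioi_eq_setIntegral_Ioc hfK]
    exact (hanti.mono (Icc_subset_Icc_left hξ)).setIntegral_Ioc_le_mul hξK
  rw [hu]
  exact defect_le_of_bounds hξ hξK (hf0 ξ hξ) (hf1 ξ hξ) hA_ge hA_le hB_nonneg hB_le

/-- For a nonincreasing kinetic profile `f` with values in `[0,1]`, vanishing past `K`,
setting `u = ∫_{(0,∞)} f` and `ρ(ξ) = ξ f(ξ) + ∫_{(ξ,∞)} f`, one has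
`0 ≤ ρ(ξ) - u f(ξ) ≤ 2K f(ξ)(1 - f(ξ))` for every `ξ ≥ 0`. -/
theorem stmt9 (K : ℝ) (hK : 0 < K) (f : ℝ → ℝ)
    (hf_anti : AntitoneOn f (Set.Ici 0))
    (hf0 : ∀ ξ, 0 ≤ ξ → 0 ≤ f ξ) (hf1 : ∀ ξ, 0 ≤ ξ → f ξ ≤ 1)
    (hfK : ∀ ξ, K < ξ → f ξ = 0) :
    ∀ ξ : ℝ, 0 ≤ ξ →
      0 ≤ (ξ * f ξ + ∫ η in Set.Ioi ξ, f η) - (∫ η in Set.Ioi (0 : ℝ), f η) * f ξ ∧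
      (ξ * f ξ + ∫ η in Set.Ioi ξ, f η) - (∫ η in Set.Ioi (0 : ℝ), f η) * f ξ
        ≤ 2 * K * (f ξ * (1 - f ξ)) :=
  stmt9_general K f hf_anti hf0 hf1 hfK
end

section
/- Let (Ω, μ) be a finite measure space and K ≥ 0. Let (u_n) and u be measurable functions on Ω with 0 ≤ u_n ≤ K and 0 ≤ u ≤ K a.e. Assume that for every g ∈ L¹(Ω × (0, ∞), μ ⊗ Lebesgue), ∫∫ 1_{ξ < u_n(x)} g(x, ξ) dξ dμ(x) → ∫∫ 1_{ξ < u(x)} g(x, ξ) dξ dμ(x) as n → ∞. Then ∫_Ω |u_n − u|² dμ → 0. -/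
/-!
Testing the kinetic formulation against `h(x) ψ(ξ) 1_{ξ ≤ M}` with `M ≥ K` integrates out `ξ`:
`∫∫ 1_{ξ < v(x)} h(x) ψ(ξ) = ∫ h(x) Ψ(v(x))` with `Ψ` the primitive of `ψ` vanishing at `0`.
With `h = 1, ψ = 2ξ` this gives `∫ u_n² → ∫ u²`, and with `h = u, ψ = 1` it gives
`∫ u u_n → ∫ u²`; expanding `∫ (u_n - u)²` then shows that it tends to `0`.
-/

open MeasureTheory Filter Set Topology

theorem setIntegral_Ioi_ite_lt_mul {a : ℝ} (ha : 0 ≤ a) (φ : ℝ → ℝ) :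
    ∫ ξ in Ioi 0, (if ξ < a then 1 else 0) * φ ξ = ∫ ξ in 0..a, φ ξ := by
  have : (fun ξ : ℝ => (if ξ < a then 1 else 0) * φ ξ) = (Iio a).indicator φ := by
    ext ξ; by_cases h : ξ < a <;> simp [h]
  rw [this, setIntegral_indicator measurableSet_Iio, Ioi_inter_Iio,
    intervalIntegral.integral_of_le ha, integral_Ioc_eq_integral_Ioo]

theorem intervalIntegral_indicator_Iic {a M : ℝ} (ha : 0 ≤ a) (haM : a ≤ M) (ψ : ℝ → ℝ) :
    ∫ ξ in 0..a, (Iic M).indicator ψ ξ = ∫ ξ in 0..a, ψ ξ := by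
  refine intervalIntegral.integral_congr fun ξ hξ => ?_
  rw [uIcc_of_le ha] at hξ
  exact indicator_of_mem (mem_Iic.2 (hξ.2.trans haM)) ψ

section

variable {Ω : Type*} [MeasurableSpace Ω] {μ : Measure Ω}

noncomputable def kinetic (v : Ω → ℝ) (p : Ω × ℝ) : ℝ := if p.2 < v p.1 then 1 else 0

def KineticTendsto (μ : Measure Ω) (f : ℕ → Ω → ℝ) (u : Ω → ℝ) : Prop :=
  ∀ g : Ω × ℝ → ℝ, Integrable g (μ.prod (volume.restrict (Ioi 0))) →
    Tendsto (fun n => ∫ p, kinetic (f n) p * g p ∂μ.prod (volume.restrict (Ioi 0))) atTop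
      (𝓝 (∫ p, kinetic u p * g p ∂μ.prod (volume.restrict (Ioi 0))))

theorem integral_kinetic_mul [SFinite μ] {v : Ω → ℝ} (hv : Measurable v)
    (hv₀ : ∀ᵐ x ∂μ, 0 ≤ v x) {g : Ω × ℝ → ℝ}
    (hg : Integrable g (μ.prod (volume.restrict (Ioi 0)))) :
    ∫ p, kinetic v p * g p ∂μ.prod (volume.restrict (Ioi 0)) =
      ∫ x, (∫ ξ in 0..v x, g (x, ξ)) ∂μ := by
  have hs : MeasurableSet {p : Ω × ℝ | p.2 < v p.1} :=
    measurableSet_lt measurable_snd (hv.comp measurable_fst)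
  have hind : (fun p => kinetic v p * g p) = {p : Ω × ℝ | p.2 < v p.1}.indicator g := by
    ext p; by_cases h : p.2 < v p.1 <;> simp [kinetic, h]
  rw [integral_prod _ (hind ▸ hg.indicator hs)]
  refine integral_congr_ae ?_
  filter_upwards [hv₀] with x hx
  exact setIntegral_Ioi_ite_lt_mul hx _

theorem integrable_mul_indicator_Iic {h : Ω → ℝ} (hh : Integrable h μ) {ψ : ℝ → ℝ}
    (hψ : Continuous ψ) (M : ℝ) :
    Integrable (fun p : Ω × ℝ => h p.1 * (Iic M).indicator ψ p.2)
      (μ.prod (volume.restrict (Ioi 0))) := by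
  refine hh.mul_prod ?_
  rw [integrable_indicator_iff measurableSet_Iic, IntegrableOn,
    Measure.restrict_restrict measurableSet_Iic, Iic_inter_Ioi]
  exact (hψ.integrableOn_Icc).mono_set Ioc_subset_Icc_self

theorem tendsto_integral_mul_primitive_of_kineticTendsto [SFinite μ] {f : ℕ → Ω → ℝ} {u : Ω → ℝ}
    (hconv : KineticTendsto μ f u) {M : ℝ} (hf : ∀ n, Measurable (f n))
    (hf_bd : ∀ n, ∀ᵐ x ∂μ, 0 ≤ f n x ∧ f n x ≤ M) (hu : Measurable u)
    (hu_bd : ∀ᵐ x ∂μ, 0 ≤ u x ∧ u x ≤ M) {h : Ω → ℝ} (hh : Integrable h μ) {ψ : ℝ → ℝ}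
    (hψ : Continuous ψ) :
    Tendsto (fun n => ∫ x, h x * (∫ ξ in 0..f n x, ψ ξ) ∂μ) atTop
      (𝓝 (∫ x, h x * (∫ ξ in 0..u x, ψ ξ) ∂μ)) := by
  have pairing : ∀ v : Ω → ℝ, Measurable v → (∀ᵐ x ∂μ, 0 ≤ v x ∧ v x ≤ M) →
      ∫ p, kinetic v p * (h p.1 * (Iic M).indicator ψ p.2) ∂μ.prod (volume.restrict (Ioi 0)) =
        ∫ x, h x * (∫ ξ in 0..v x, ψ ξ) ∂μ := by
    intro v hv hv_bd
    rw [integral_kinetic_mul hv (hv_bd.mono fun _ hx => hx.1)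
      (integrable_mul_indicator_Iic hh hψ M)]
    refine integral_congr_ae ?_
    filter_upwards [hv_bd] with x hx
    rw [intervalIntegral.integral_const_mul, intervalIntegral_indicator_Iic hx.1 hx.2]
  rw [← pairing u hu hu_bd]
  exact (hconv _ (integrable_mul_indicator_Iic hh hψ M)).congr fun n =>
    pairing (f n) (hf n) (hf_bd n)

theorem tendsto_integral_sub_sq_of_tendsto {f : ℕ → Ω → ℝ} {u : Ω → ℝ}
    (hf : ∀ n, MemLp (f n) 2 μ) (hu : MemLp u 2 μ)
    (h_sq : Tendsto (fun n => ∫ x, f n x ^ 2 ∂μ) atTop (𝓝 (∫ x, u x ^ 2 ∂μ)))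
    (h_mul : Tendsto (fun n => ∫ x, u x * f n x ∂μ) atTop (𝓝 (∫ x, u x ^ 2 ∂μ))) :
    Tendsto (fun n => ∫ x, (f n x - u x) ^ 2 ∂μ) atTop (𝓝 0) := by
  have expand : ∀ n, ∫ x, (f n x - u x) ^ 2 ∂μ =
      ∫ x, f n x ^ 2 ∂μ - 2 * ∫ x, u x * f n x ∂μ + ∫ x, u x ^ 2 ∂μ := by
    intro n
    have hfu : Integrable (fun x => 2 * (u x * f n x)) μ := (hu.integrable_mul (hf n)).const_mul 2
    have hf2 : Integrable (fun x => f n x ^ 2 - 2 * (u x * f n x)) μ :=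
      (hf n).integrable_sq.sub hfu
    calc ∫ x, (f n x - u x) ^ 2 ∂μ = ∫ x, (f n x ^ 2 - 2 * (u x * f n x)) + u x ^ 2 ∂μ := by
          congr 1 with x; ring
      _ = _ := by
          rw [integral_add hf2 hu.integrable_sq,
            integral_sub (hf n).integrable_sq hfu, integral_const_mul]
  have h_lim := (h_sq.sub (h_mul.const_mul 2)).add (tendsto_const_nhds (x := ∫ x, u x ^ 2 ∂μ))
  rw [show ∫ x, u x ^ 2 ∂μ - 2 * ∫ x, u x ^ 2 ∂μ + ∫ x, u x ^ 2 ∂μ = 0 by ring] at h_lim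
  exact h_lim.congr fun n => (expand n).symm
end

theorem stmt17_general {Ω : Type*} [MeasurableSpace Ω] (μ : Measure Ω) [IsFiniteMeasure μ]
    (K : ℝ)
    (un : ℕ → Ω → ℝ) (hun_meas : ∀ n, Measurable (un n))
    (hun_bd : ∀ n, ∀ᵐ x ∂μ, 0 ≤ un n x ∧ un n x ≤ K)
    (u : Ω → ℝ) (hu_meas : Measurable u) (hu_bd : ∀ᵐ x ∂μ, 0 ≤ u x ∧ u x ≤ K)
    (hconv : ∀ g : Ω × ℝ → ℝ,
      Integrable g (μ.prod (volume.restrict (Set.Ioi (0 : ℝ)))) →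
      Tendsto
        (fun n => ∫ p, (if p.2 < un n p.1 then (1 : ℝ) else 0) * g p
          ∂(μ.prod (volume.restrict (Set.Ioi (0 : ℝ)))))
        atTop
        (nhds (∫ p, (if p.2 < u p.1 then (1 : ℝ) else 0) * g p
          ∂(μ.prod (volume.restrict (Set.Ioi (0 : ℝ))))))) :
    Tendsto (fun n => ∫ x, |un n x - u x| ^ 2 ∂μ) atTop (nhds 0) := by
  have hconv : KineticTendsto μ un u := hconv
  have memLp_two : ∀ v : Ω → ℝ, Measurable v → (∀ᵐ x ∂μ, 0 ≤ v x ∧ v x ≤ K) → MemLp v 2 μ :=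
    fun v hv hv_bd => (memLp_top_of_bound hv.aestronglyMeasurable K <| hv_bd.mono fun x hx => by
      rw [Real.norm_eq_abs, abs_of_nonneg hx.1]; exact hx.2).mono_exponent le_top
  have h_sq := tendsto_integral_mul_primitive_of_kineticTendsto hconv hun_meas hun_bd hu_meas hu_bd
    (integrable_const 1) (ψ := fun ξ => 2 * ξ) (continuous_const_mul 2)
  have h_mul := tendsto_integral_mul_primitive_of_kineticTendsto hconv hun_meas hun_bd hu_meas hu_bd
    ((memLp_two u hu_meas hu_bd).integrable one_le_two) (ψ := fun _ => 1) continuous_const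
  simp only [sq_abs]
  refine tendsto_integral_sub_sq_of_tendsto (fun n => memLp_two _ (hun_meas n) (hun_bd n))
    (memLp_two u hu_meas hu_bd) ?_ ?_
  · have primitive_two_mul (a : ℝ) : ∫ ξ in (0 : ℝ)..a, 2 * ξ = a ^ 2 := by
      rw [intervalIntegral.integral_const_mul, integral_id]; ring
    simpa only [one_mul, primitive_two_mul] using h_sq
  · simpa [← sq] using h_mul

/-- If the kinetic functions `1_{ξ<u_n(x)}` converge weakly-* in `L^∞(Ω × (0,∞))` to the
kinetic function `1_{ξ<u(x)}`, with `0 ≤ u_n, u ≤ K` a.e. on a finite measure space, then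
`u_n → u` strongly in `L²(μ)`. -/
theorem stmt17 {Ω : Type*} [MeasurableSpace Ω] (μ : Measure Ω) [IsFiniteMeasure μ]
    (K : ℝ) (hK : 0 ≤ K)
    (un : ℕ → Ω → ℝ) (hun_meas : ∀ n, Measurable (un n))
    (hun_bd : ∀ n, ∀ᵐ x ∂μ, 0 ≤ un n x ∧ un n x ≤ K)
    (u : Ω → ℝ) (hu_meas : Measurable u) (hu_bd : ∀ᵐ x ∂μ, 0 ≤ u x ∧ u x ≤ K)
    (hconv : ∀ g : Ω × ℝ → ℝ,
      Integrable g (μ.prod (volume.restrict (Set.Ioi (0 : ℝ)))) →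
      Tendsto
        (fun n => ∫ p, (if p.2 < un n p.1 then (1 : ℝ) else 0) * g p
          ∂(μ.prod (volume.restrict (Set.Ioi (0 : ℝ)))))
        atTop
        (nhds (∫ p, (if p.2 < u p.1 then (1 : ℝ) else 0) * g p
          ∂(μ.prod (volume.restrict (Set.Ioi (0 : ℝ))))))) :
    Tendsto (fun n => ∫ x, |un n x - u x| ^ 2 ∂μ) atTop (nhds 0) :=
  stmt17_general μ K un hun_meas hun_bd u hu_meas hu_bd hconv
end
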